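/- arXiv:1603.01137 — 4 statements merged into one kernel-verified Lean document; each statement's English description precedes it below -/
import Mathlib

section
/- Let P be a finite poset, let x < y in P, and let σ : P → ℤ be a strictly increasing function. Consider the reduced order cochain complex C̃^• of the half-open interval (x,y] = {z ∈ P : x < z ≤ y}, and for p ∈ ℤ define F^p C̃^d to be the subgroup spanned by those chains z_0 < ⋯ < z_d in (x,y] with σ(z_d) ≥ p, where in degree d = −1 one sets F^p C̃^{−1} = C̃^{−1} if p ≤ σ(x) and 0 otherwise. Then: (1) each F^p is a subcomplex of C̃^•, giving a decreasing filtration; and (2) for every p, the quotient complex F^p C̃^•/F^{p+1}C̃^• is isomorphic, as a cochain complex of abelian groups, to the direct sum ⊕_{x ≤ z ≤ y, σ(z) = p} C̃^{•−1}(x,z), via the map sending (the class of) a chain z_0 < ⋯ < z_d with σ(z_d) = p to the chain z_0 < ⋯ < z_{d−1} regarded as a basis element of C̃^{d−1}(x, z_d) (the empty chain in degree −1 is sent to the generator of C̃^{−2}(x,x) = ℤ when p = σ(x)). -/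
attribute [local instance] Classical.propDecidable

universe u

variable {P : Type u} [PartialOrder P]

/-! ### The reduced order cochain complex of the half-open interval `(x, y]` -/

/-- A chain `z_0 < z_1 < ⋯ < z_{n-1}` of `n` elements in the half-open interval
`(x, y] = {z | x < z ≤ y}`, i.e. a basis element of the degree-`(n-1)` term of the
reduced order cochain complex `C̃^{n-1}(N(x,y])`.  For `n = 0` this is the empty chain. -/
abbrev HalfOpenChain (x y : P) (n : ℕ) : Type u :=
  {w : Fin n → P // StrictMono w ∧ ∀ i, w i ∈ Set.Ioc x y}

/-- The degree-`(n-1)` term `C̃^{n-1}(N(x,y])` of the reduced order cochain complex of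
the half-open interval: the free `ℤ`-module on chains of `n` elements of `(x,y]`. -/
abbrev HalfOpenCochain (x y : P) (n : ℕ) : Type u :=
  HalfOpenChain x y n →₀ ℤ

noncomputable instance [Fintype P] (x y : P) (n : ℕ) : Fintype (HalfOpenChain x y n) :=
  Subtype.fintype _

/-- The differential of the reduced order cochain complex of `(x,y]`: a chain `c` is sent
to the alternating sum over all ways of inserting an element of `(x,y]` into `c`, with
sign `(-1)^j` where `j` is the (0-indexed) position of the new element in the resulting
chain. -/
noncomputable def halfOpenCoboundary [Fintype P] (x y : P) (n : ℕ) :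
    HalfOpenCochain x y n →ₗ[ℤ] HalfOpenCochain x y (n + 1) :=
  Finsupp.lsum ℤ fun c => LinearMap.toSpanSingleton ℤ (HalfOpenCochain x y (n + 1))
    (∑ c' : HalfOpenChain x y (n + 1), ∑ j : Fin (n + 1),
      (if c'.val ∘ j.succAbove = c.val then ((-1 : ℤ)) ^ (j : ℕ) else 0) •
        Finsupp.single c' 1)

/-- The last element of a chain of `n` elements, with the convention that the last element
of the empty chain is `x` (thought of as the entry `z_{-1} = x` of the augmented chain
`x = z_{-1} < z_0 < ⋯ < z_{n-1}`). -/
def lastEntry (x : P) : ∀ {n : ℕ}, (Fin n → P) → P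
  | 0, _ => x
  | (m + 1), w => w (Fin.last m)

/-- The filtration `F^p C̃^{n-1}(N(x,y])`: the span of the chains `z_0 < ⋯ < z_{n-1}`
with `σ(z_{n-1}) ≥ p`; in degree `-1` (i.e. `n = 0`) this is all of `C̃^{-1}` if
`p ≤ σ(x)` and `0` otherwise. -/
noncomputable def filtF [Fintype P] (x y : P) (σ : P → ℤ) (p : ℤ) (n : ℕ) :
    Submodule ℤ (HalfOpenCochain x y n) :=
  Finsupp.supported ℤ ℤ {c : HalfOpenChain x y n | p ≤ σ (lastEntry x c.val)}

/-- The degree-`n` piece of the quotient complex `F^p C̃^• / F^{p+1} C̃^•`. -/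
noncomputable abbrev gradedPiece [Fintype P] (x y : P) (σ : P → ℤ) (p : ℤ) (n : ℕ) :
    Type u :=
  ↥(filtF x y σ p n) ⧸
    Submodule.comap (filtF x y σ p n).subtype (filtF x y σ (p + 1) n)

/-! ### The interval complexes `C̃^{•-1}(x,z)` -/

/-- A basis element of `C̃^{m-2}(x,z)`: a strictly increasing sequence
`x = w 0 < w 1 < ⋯ < w m = z`.  For `x < z` these are the faces of the nerve of the open
interval `(x,z)`; for `x = z` the only such sequence has `m = 0`, giving `ℤ` placed in
degree `-2`. -/
abbrev IntervalChain (x z : P) (m : ℕ) : Type u :=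
  {w : Fin (m + 1) → P // StrictMono w ∧ w 0 = x ∧ w (Fin.last m) = z}

/-- The degree-`(m-2)` term of the complex `C̃^•(x,z)`. -/
abbrev IntervalCochain (x z : P) (m : ℕ) : Type u :=
  IntervalChain x z m →₀ ℤ

noncomputable instance [Fintype P] (x z : P) (m : ℕ) : Fintype (IntervalChain x z m) :=
  Subtype.fintype _

/-- The differential of `C̃^•(x,z)`: the alternating sum over all ways of inserting an
element into the sequence, with sign `(-1)^{j-1}` for insertion at index `j` of the
augmented sequence (so the exponent is the position of the new element in the chain of
the open interval, not counting the initial entry `x`). -/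
noncomputable def intervalCoboundary [Fintype P] (x z : P) (m : ℕ) :
    IntervalCochain x z m →ₗ[ℤ] IntervalCochain x z (m + 1) :=
  Finsupp.lsum ℤ fun c => LinearMap.toSpanSingleton ℤ (IntervalCochain x z (m + 1))
    (∑ c' : IntervalChain x z (m + 1), ∑ j : Fin (m + 2),
      (if c'.val ∘ j.succAbove = c.val then ((-1 : ℤ)) ^ ((j : ℕ) - 1) else 0) •
        Finsupp.single c' 1)

/-- The degree-`n` term `⊕_{x ≤ z ≤ y, σ(z) = p} C̃^{n-2}(x,z)` of the direct sum of the
shifted interval complexes `C̃^{•-1}(x,z)` (the degree-`d` term of `C̃^{•-1}(x,z)` being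
`C̃^{d-1}(x,z)`, i.e. `m = n` in our indexing where `n = d + 1`). -/
noncomputable abbrev gradedTarget [Fintype P] (x y : P) (σ : P → ℤ) (p : ℤ) (n : ℕ) :
    Type u :=
  DirectSum {z : P // x ≤ z ∧ z ≤ y ∧ σ z = p} (fun z => IntervalCochain x z.val n)

/-- The differential of the direct sum of the shifted interval complexes. -/
noncomputable def gradedTargetCoboundary [Fintype P] (x y : P) (σ : P → ℤ) (p : ℤ)
    (n : ℕ) : gradedTarget x y σ p n →ₗ[ℤ] gradedTarget x y σ p (n + 1) :=
  DirectSum.toModule ℤ _ _ fun z =>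
    (DirectSum.lof ℤ _ (fun z : {z : P // x ≤ z ∧ z ≤ y ∧ σ z = p} =>
      IntervalCochain x z.val (n + 1)) z).comp (intervalCoboundary x z.val n)

/-! The coboundary of `(x, y]` is the transpose of the alternating deletion map, and `δ ∘ δ = 0`
because the two orders of deleting a pair of entries contribute opposite signs. Deleting an entry
never increases the last element of a chain, so for monotone `σ` each `F^p` is a subcomplex.
Modulo `F^{p+1}` only the chains `z_0 < ⋯ < z_d` with `σ z_d = p` survive, and since `σ` is
strictly monotone a surviving coface must keep the last entry `z_d`; prefixing `x` identifies
these chains with the augmented chains of `C̃^•(x, z_d)`, and the deletion signs match up to the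
shift by the new first entry. -/

section Deletions

variable {α : Type*}

theorem Fin.val_succAbove_eq_ite {n : ℕ} (p : Fin (n + 1)) (i : Fin n) :
    (p.succAbove i : ℕ) = if (i : ℕ) < p then (i : ℕ) else i + 1 := by
  unfold Fin.succAbove
  split_ifs <;> simp_all [Fin.lt_def]

/-- Deleting entry `j` and then entry `k` of the shortened tuple deletes the same two entries as
deleting the pair `Fin.swapDeletions (j, k)` in that order. -/
def Fin.swapDeletions {n : ℕ} (q : Fin (n + 2) × Fin (n + 1)) : Fin (n + 2) × Fin (n + 1) :=
  if h : (q.2 : ℕ) < q.1 then (q.2.castSucc, ⟨q.1 - 1, by omega⟩) else (q.2.succ, ⟨q.1, by omega⟩)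

theorem Fin.swapDeletions_involutive {n : ℕ} :
    Function.Involutive (Fin.swapDeletions (n := n)) := by
  rintro ⟨j, k⟩
  unfold Fin.swapDeletions
  dsimp only
  split_ifs with h₁ h₂ h₂ <;> simp only [Fin.val_castSucc, Fin.val_succ] at h₂ <;>
    simp [Prod.ext_iff, Fin.ext_iff] <;> omega

theorem Fin.swapDeletions_ne {n : ℕ} (q : Fin (n + 2) × Fin (n + 1)) :
    Fin.swapDeletions q ≠ q := by
  obtain ⟨j, k⟩ := q
  unfold Fin.swapDeletions
  dsimp only
  split_ifs <;> simp [Prod.ext_iff, Fin.ext_iff] <;> omega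

theorem Fin.succAbove_comp_succAbove_swapDeletions {n : ℕ} (q : Fin (n + 2) × Fin (n + 1)) :
    (Fin.swapDeletions q).1.succAbove ∘ (Fin.swapDeletions q).2.succAbove =
      q.1.succAbove ∘ q.2.succAbove := by
  obtain ⟨j, k⟩ := q
  unfold Fin.swapDeletions
  dsimp only
  funext m
  split_ifs <;> ext <;> simp only [Function.comp_apply, Fin.val_succAbove_eq_ite, Fin.val_succ,
    Fin.val_castSucc] <;> split_ifs <;> omega

theorem Fin.neg_one_pow_swapDeletions {n : ℕ} (q : Fin (n + 2) × Fin (n + 1)) :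
    (-1 : ℤ) ^ ((Fin.swapDeletions q).1 + (Fin.swapDeletions q).2 : ℕ) =
      -(-1) ^ (q.1 + q.2 : ℕ) := by
  obtain ⟨j, k⟩ := q
  unfold Fin.swapDeletions
  dsimp only
  split_ifs
  · rw [show (j + k : ℕ) = k + (j - 1) + 1 by omega, pow_succ]; simp
  · rw [show (k.succ + j : ℕ) = j + k + 1 by simp; omega, pow_succ]; simp

theorem Fin.comp_succ_succAbove_eq_iff {n : ℕ} {f : Fin (n + 2) → α}
    {g : Fin (n + 1) → α} (h : f 0 = g 0) (j : Fin (n + 1)) :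
    f ∘ j.succ.succAbove = g ↔ Fin.tail f ∘ j.succAbove = Fin.tail g := by
  constructor
  · rintro rfl
    funext i
    simp [Fin.tail, Fin.succ_succAbove_succ]
  · intro hfg
    funext i
    cases i using Fin.cases with
    | zero => simpa using h
    | succ i => simpa [Fin.tail, Fin.succ_succAbove_succ] using congrFun hfg i

/-- The coefficient of `f` in the coboundary of `g`. -/
noncomputable def faceCoeff {n : ℕ} (f : Fin (n + 1) → α) (g : Fin n → α) : ℤ :=
  ∑ j : Fin (n + 1), if f ∘ j.succAbove = g then (-1) ^ (j : ℕ) else 0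

theorem exists_comp_succAbove_eq_of_faceCoeff_ne_zero {n : ℕ} {f : Fin (n + 1) → α}
    {g : Fin n → α} (h : faceCoeff f g ≠ 0) : ∃ j : Fin (n + 1), f ∘ j.succAbove = g := by
  by_contra! hne
  exact h (Finset.sum_eq_zero fun j _ => if_neg (hne j))

theorem sum_neg_one_pow_mul_faceCoeff_comp_succAbove {n : ℕ} (f : Fin (n + 2) → α)
    (g : Fin n → α) :
    ∑ j : Fin (n + 2), (-1) ^ (j : ℕ) * faceCoeff (f ∘ j.succAbove) g = 0 := by
  simp only [faceCoeff, Finset.mul_sum, mul_ite, mul_zero, ← pow_add]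
  rw [← Finset.sum_product']
  refine Finset.sum_ninvolution Fin.swapDeletions (fun q => ?_) (fun q _ => Fin.swapDeletions_ne q)
    (fun q => Finset.mem_univ _) Fin.swapDeletions_involutive
  simp only [Function.comp_assoc, Fin.succAbove_comp_succAbove_swapDeletions,
    Fin.neg_one_pow_swapDeletions]
  split_ifs <;> simp

end Deletions

theorem cons_last_eq_lastEntry {α : Type*} (x : α) {n : ℕ} (f : Fin n → α) :
    (Fin.cons x f : Fin (n + 1) → α) (Fin.last n) = lastEntry x f := by
  cases n with
  | zero => rfl
  | succ m => exact Fin.cons_last _ _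

theorem lastEntry_comp_succAbove_le {x : P} {n : ℕ} {f : Fin (n + 1) → P} (hf : Monotone f)
    (hx : ∀ i, x ≤ f i) (j : Fin (n + 1)) : lastEntry x (f ∘ j.succAbove) ≤ lastEntry x f := by
  cases n with
  | zero => exact hx _
  | succ m => exact hf (Fin.le_last _)

section Chains

variable {x y z : P} {σ : P → ℤ} {p : ℤ}

def HalfOpenChain.eraseAt {n : ℕ} (c : HalfOpenChain x y (n + 1)) (j : Fin (n + 1)) :
    HalfOpenChain x y n :=
  ⟨c.val ∘ j.succAbove, c.2.1.comp (Fin.strictMono_succAbove j), fun _ => c.2.2 _⟩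

theorem lastEntry_mem_Icc (hxy : x ≤ y) {n : ℕ} (c : HalfOpenChain x y n) :
    lastEntry x c.val ∈ Set.Icc x y := by
  cases n with
  | zero => exact ⟨le_rfl, hxy⟩
  | succ m => exact Set.Ioc_subset_Icc_self (c.2.2 _)

theorem lastEntry_le_of_faceCoeff_ne_zero {n : ℕ} {c' : HalfOpenChain x y (n + 1)}
    {c : HalfOpenChain x y n} (h : faceCoeff c'.val c.val ≠ 0) :
    lastEntry x c.val ≤ lastEntry x c'.val := by
  obtain ⟨j, hj⟩ := exists_comp_succAbove_eq_of_faceCoeff_ne_zero h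
  rw [← hj]
  exact lastEntry_comp_succAbove_le c'.2.1.monotone (fun i => (c'.2.2 i).1.le) j

theorem faceCoeff_eq_zero_of_lastEntry_ne (hσ : StrictMono σ) {n : ℕ}
    {c' : HalfOpenChain x y (n + 1)} {c : HalfOpenChain x y n}
    (hc' : σ (lastEntry x c'.val) = p) (hc : σ (lastEntry x c.val) = p)
    (hne : lastEntry x c'.val ≠ lastEntry x c.val) : faceCoeff c'.val c.val = 0 := by
  by_contra h
  exact (hσ ((lastEntry_le_of_faceCoeff_ne_zero h).lt_of_ne hne.symm)).ne (hc.trans hc'.symm)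

theorem IntervalChain.cons_tail {n : ℕ} (w : IntervalChain x z n) :
    Fin.cons x (Fin.tail w.val) = w.val := by
  have h := Fin.cons_self_tail w.val
  rwa [w.2.2.1] at h

theorem IntervalChain.lastEntry_tail {n : ℕ} (w : IntervalChain x z n) :
    lastEntry x (Fin.tail w.val) = z := by
  rw [← cons_last_eq_lastEntry, w.cons_tail, w.2.2.2]

def IntervalChain.tail (hzy : z ≤ y) {n : ℕ} (w : IntervalChain x z n) :
    HalfOpenChain x y n :=
  ⟨Fin.tail w.val, w.2.1.comp Fin.strictMono_succ, fun i =>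
    ⟨w.2.2.1.symm.trans_lt (w.2.1 i.succ_pos),
      (w.2.1.monotone (Fin.le_last _)).trans (w.2.2.2.le.trans hzy)⟩⟩

theorem IntervalChain.faceCoeff_tail_eq {n : ℕ} (w' : IntervalChain x z (n + 1))
    (w : IntervalChain x z n) :
    faceCoeff (Fin.tail w'.val) (Fin.tail w.val) =
      ∑ j : Fin (n + 2), if w'.val ∘ j.succAbove = w.val then (-1) ^ ((j : ℕ) - 1) else 0 := by
  rw [Fin.sum_univ_succ, Fin.succAbove_zero, if_neg, zero_add, faceCoeff]
  · refine Finset.sum_congr rfl fun j _ => ?_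
    simp only [Fin.comp_succ_succAbove_eq_iff (w'.2.2.1.trans w.2.2.1.symm), Fin.val_succ,
      Nat.add_sub_cancel]
  · intro h
    have h0 := congrFun h 0
    rw [Function.comp_apply, w.2.2.1] at h0
    exact (w'.2.1 (Fin.succ_pos 0)).ne' (h0.trans w'.2.2.1.symm)

abbrev filtChains (x y : P) (σ : P → ℤ) (p : ℤ) (n : ℕ) : Set (HalfOpenChain x y n) :=
  {c | p ≤ σ (lastEntry x c.val)}

theorem mem_filtChains_diff_iff {n : ℕ} {c : HalfOpenChain x y n} :
    c ∈ filtChains x y σ p n \ filtChains x y σ (p + 1) n ↔ σ (lastEntry x c.val) = p := by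
  change p ≤ _ ∧ ¬ p + 1 ≤ _ ↔ _
  omega

/-- A chain `z_0 < ⋯ < z_d` with `σ z_d = p` is recorded as the summand `z_d` together with the
augmented chain `x < z_0 < ⋯ < z_d`. -/
def gradedChainEquiv (hxy : x ≤ y) (σ : P → ℤ) (p : ℤ) (n : ℕ) :
    ↥(filtChains x y σ p n \ filtChains x y σ (p + 1) n) ≃
      Σ z : {z : P // x ≤ z ∧ z ≤ y ∧ σ z = p}, IntervalChain x z.val n where
  toFun c :=
    ⟨⟨lastEntry x c.1.val, (lastEntry_mem_Icc hxy c.1).1, (lastEntry_mem_Icc hxy c.1).2,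
        mem_filtChains_diff_iff.mp c.2⟩,
      ⟨Fin.cons x c.1.val, Fin.strictMono_cons.mpr ⟨fun i => (c.1.2.2 i).1, c.1.2.1⟩,
        Fin.cons_zero _ _, cons_last_eq_lastEntry x _⟩⟩
  invFun w := ⟨w.2.tail w.1.2.2.1, mem_filtChains_diff_iff.mpr <| by
    rw [show (w.2.tail w.1.2.2.1).val = Fin.tail w.2.val from rfl, w.2.lastEntry_tail]
    exact w.1.2.2.2⟩
  left_inv c := Subtype.ext <| Subtype.ext <| Fin.tail_cons (α := fun _ => P) x c.1.val
  right_inv w := Sigma.subtype_ext (Subtype.ext w.2.lastEntry_tail) w.2.cons_tail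

end Chains

section Coboundary

variable [Fintype P] {x y z : P}

theorem halfOpenCoboundary_single {n : ℕ} (c : HalfOpenChain x y n) :
    halfOpenCoboundary x y n (Finsupp.single c 1) =
      ∑ c' : HalfOpenChain x y (n + 1), faceCoeff c'.val c.val • Finsupp.single c' 1 := by
  simp only [halfOpenCoboundary, Finsupp.lsum_single, LinearMap.toSpanSingleton_apply_one,
    faceCoeff, Finset.sum_smul]

theorem halfOpenCoboundary_single_apply {n : ℕ} (c : HalfOpenChain x y n)
    (c' : HalfOpenChain x y (n + 1)) :
    halfOpenCoboundary x y n (Finsupp.single c 1) c' = faceCoeff c'.val c.val := by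
  simp [halfOpenCoboundary_single, Finsupp.finsetSum_apply, Finsupp.single_apply]

theorem subtypeDomain_halfOpenCoboundary_single {n : ℕ} (c : HalfOpenChain x y n)
    (u : Set (HalfOpenChain x y (n + 1))) [Fintype u] :
    (halfOpenCoboundary x y n (Finsupp.single c 1)).subtypeDomain (· ∈ u) =
      ∑ c' : u, faceCoeff c'.1.val c.val • Finsupp.single c' 1 := by
  ext c'
  simp [halfOpenCoboundary_single_apply, Finsupp.finsetSum_apply, Finsupp.single_apply]

theorem sum_faceCoeff_mul {n : ℕ} (c' : HalfOpenChain x y (n + 1)) (a : (Fin n → P) → ℤ) :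
    ∑ c : HalfOpenChain x y n, faceCoeff c'.val c.val * a c.val =
      ∑ j : Fin (n + 1), (-1) ^ (j : ℕ) * a (c'.val ∘ j.succAbove) := by
  simp only [faceCoeff, Finset.sum_mul, ite_mul, zero_mul]
  rw [Finset.sum_comm]
  refine Finset.sum_congr rfl fun j _ => ?_
  have hval (c : HalfOpenChain x y n) : c'.val ∘ j.succAbove = c.val ↔ c'.eraseAt j = c :=
    (Subtype.ext_iff (a1 := c'.eraseAt j)).symm
  simp only [hval, Finset.sum_ite_eq, Finset.mem_univ, if_true]
  rfl

theorem halfOpenCoboundary_comp_self (n : ℕ) :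
    halfOpenCoboundary x y (n + 1) ∘ₗ halfOpenCoboundary x y n = 0 := by
  refine Finsupp.lhom_ext' fun c => LinearMap.ext_ring ?_
  simp only [LinearMap.comp_apply, Finsupp.lsingle_apply, LinearMap.zero_apply,
    halfOpenCoboundary_single, map_sum, map_zsmul, Finset.smul_sum, smul_smul]
  rw [Finset.sum_comm]
  refine Finset.sum_eq_zero fun c'' _ => ?_
  rw [← Finset.sum_smul]
  simp_rw [mul_comm (faceCoeff _ c.val), sum_faceCoeff_mul c'' (faceCoeff · c.val),
    sum_neg_one_pow_mul_faceCoeff_comp_succAbove, zero_smul]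

theorem intervalCoboundary_single {n : ℕ} (w : IntervalChain x z n) :
    intervalCoboundary x z n (Finsupp.single w 1) =
      ∑ w' : IntervalChain x z (n + 1),
        faceCoeff (Fin.tail w'.val) (Fin.tail w.val) • Finsupp.single w' 1 := by
  simp only [intervalCoboundary, Finsupp.lsum_single, LinearMap.toSpanSingleton_apply_one,
    IntervalChain.faceCoeff_tail_eq, Finset.sum_smul]

theorem filtF_antitone (σ : P → ℤ) (n : ℕ) : Antitone fun q => filtF x y σ q n :=
  fun _ _ hq => Finsupp.supported_mono fun _ hc => hq.trans hc

theorem halfOpenCoboundary_mem_filtF {σ : P → ℤ} (hσ : Monotone σ) {q : ℤ} {n : ℕ}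
    {v : HalfOpenCochain x y n} (hv : v ∈ filtF x y σ q n) :
    halfOpenCoboundary x y n v ∈ filtF x y σ q (n + 1) := by
  suffices filtF x y σ q n ≤ (filtF x y σ q (n + 1)).comap (halfOpenCoboundary x y n) from
    this hv
  rw [filtF, Finsupp.supported_eq_span_single, Submodule.span_le]
  rintro _ ⟨c, hc, rfl⟩
  rw [SetLike.mem_coe, Submodule.mem_comap, halfOpenCoboundary_single]
  refine Submodule.sum_mem _ fun c' _ => ?_
  by_cases h : faceCoeff c'.val c.val = 0
  · simp [h]
  · exact Submodule.smul_mem _ _ <| Finsupp.single_mem_supported ℤ 1 <|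
      le_trans hc (hσ (lastEntry_le_of_faceCoeff_ne_zero h))

end Coboundary

namespace Finsupp

variable {α M R : Type*}

theorem subtypeDomain_single_of_mem [Zero M] {p : α → Prop} {a : α} (ha : p a) (m : M) :
    (single a m).subtypeDomain p = single ⟨a, ha⟩ m := by
  ext b
  simp [single_apply, Subtype.ext_iff]

section Semiring

variable [Semiring R] [AddCommMonoid M] [Module R M] {s t : Set α}

theorem subtypeDomain_diff_eq_zero_of_mem_supported {v : α →₀ M} (hv : v ∈ supported M R t) :
    v.subtypeDomain (· ∈ s \ t) = 0 := by
  rw [mem_supported'] at hv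
  exact subtypeDomain_eq_zero_iff'.mpr fun a ha => hv a ha.2

theorem subtypeDomain_diff_eq_zero_iff {v : α →₀ M} (hv : v ∈ supported M R s) :
    v.subtypeDomain (· ∈ s \ t) = 0 ↔ v ∈ supported M R t := by
  refine ⟨fun h => (mem_supported' R v).mpr fun a hat => ?_,
    subtypeDomain_diff_eq_zero_of_mem_supported⟩
  by_cases has : a ∈ s
  · exact subtypeDomain_eq_zero_iff'.mp h a ⟨has, hat⟩
  · exact (mem_supported' R v).mp hv a has

end Semiring

variable [Ring R] [AddCommGroup M] [Module R M] {s t : Set α}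

theorem ker_lsubtypeDomain_diff_comp_subtype :
    LinearMap.ker (lsubtypeDomain (M := M) (R := R) (s \ t) ∘ₗ (supported M R s).subtype) =
      (supported M R t).comap (supported M R s).subtype := by
  ext ⟨v, hv⟩
  exact subtypeDomain_diff_eq_zero_iff hv

theorem lsubtypeDomain_diff_comp_subtype_surjective :
    Function.Surjective (lsubtypeDomain (M := M) (R := R) (s \ t) ∘ₗ (supported M R s).subtype) :=
  fun g => ⟨⟨g.extendDomain, (mem_supported R _).mpr fun _ ha =>
      (support_extendDomain_subset g ha).1⟩, subtypeDomain_extendDomain g⟩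

noncomputable def supportedQuotEquiv :
    (supported M R s ⧸ (supported M R t).comap (supported M R s).subtype) ≃ₗ[R]
      (↥(s \ t) →₀ M) :=
  (Submodule.quotEquivOfEq _ _ ker_lsubtypeDomain_diff_comp_subtype.symm).trans
    (LinearMap.quotKerEquivOfSurjective _ lsubtypeDomain_diff_comp_subtype_surjective)

end Finsupp

section GradedPiece

variable [Fintype P] {x y : P} {σ : P → ℤ} {p : ℤ}

noncomputable def gradedChainsLEquiv (hxy : x ≤ y) (σ : P → ℤ) (p : ℤ) (n : ℕ) :
    (↥(filtChains x y σ p n \ filtChains x y σ (p + 1) n) →₀ ℤ) ≃ₗ[ℤ]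
      gradedTarget x y σ p n :=
  (Finsupp.domLCongr (gradedChainEquiv hxy σ p n)).trans (sigmaFinsuppLequivDFinsupp ℤ)

theorem gradedChainsLEquiv_single (hxy : x ≤ y) {n : ℕ}
    (c : ↥(filtChains x y σ p n \ filtChains x y σ (p + 1) n)) :
    gradedChainsLEquiv hxy σ p n (Finsupp.single c 1) =
      DirectSum.lof ℤ _ (fun z : {z : P // x ≤ z ∧ z ≤ y ∧ σ z = p} => IntervalCochain x z.val n)
        (gradedChainEquiv hxy σ p n c).1 (Finsupp.single (gradedChainEquiv hxy σ p n c).2 1) := by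
  rw [gradedChainsLEquiv, LinearEquiv.trans_apply, Finsupp.domLCongr_single]
  exact sigmaFinsuppEquivDFinsupp_single _ _

theorem gradedChainsLEquiv_subtypeDomain_halfOpenCoboundary (hxy : x ≤ y) (hσ : StrictMono σ)
    {n : ℕ} (c : ↥(filtChains x y σ p n \ filtChains x y σ (p + 1) n)) :
    gradedChainsLEquiv hxy σ p (n + 1)
        ((halfOpenCoboundary x y n (Finsupp.single c.1 1)).subtypeDomain
          (· ∈ filtChains x y σ p (n + 1) \ filtChains x y σ (p + 1) (n + 1))) =
      gradedTargetCoboundary x y σ p n (gradedChainsLEquiv hxy σ p n (Finsupp.single c 1)) := by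
  set e := gradedChainEquiv hxy σ p (n + 1)
  set z := (gradedChainEquiv hxy σ p n c).1
  let lof' := DirectSum.lof ℤ _
    (fun z : {z : P // x ≤ z ∧ z ≤ y ∧ σ z = p} => IntervalCochain x z.val (n + 1))
  rw [subtypeDomain_halfOpenCoboundary_single, map_sum, gradedChainsLEquiv_single,
    gradedTargetCoboundary, DirectSum.toModule_lof, LinearMap.comp_apply,
    intervalCoboundary_single, map_sum]
  calc _ = ∑ q, faceCoeff (e.symm q).1.val c.1.val • lof' q.1 (Finsupp.single q.2 1) :=
        Fintype.sum_equiv e _ _ fun c' => by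
          rw [map_zsmul, gradedChainsLEquiv_single, e.symm_apply_apply]
    _ = ∑ z', ∑ w', faceCoeff (e.symm ⟨z', w'⟩).1.val c.1.val • lof' z' (Finsupp.single w' 1) :=
        Fintype.sum_sigma _
    _ = ∑ w', faceCoeff (e.symm ⟨z, w'⟩).1.val c.1.val • lof' z (Finsupp.single w' 1) := by
        refine Fintype.sum_eq_single z fun z' hz' => Finset.sum_eq_zero fun w' _ => ?_
        rw [faceCoeff_eq_zero_of_lastEntry_ne hσ (mem_filtChains_diff_iff.mp (e.symm ⟨z', w'⟩).2)
          (mem_filtChains_diff_iff.mp c.2), zero_smul]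
        exact fun h => hz' (Subtype.ext (w'.lastEntry_tail.symm.trans h))
    _ = _ := by
        refine Finset.sum_congr rfl fun w' _ => ?_
        rw [map_zsmul]
        rfl

noncomputable def gradedPieceEquiv (hxy : x ≤ y) (σ : P → ℤ) (p : ℤ) (n : ℕ) :
    gradedPiece x y σ p n ≃ₗ[ℤ] gradedTarget x y σ p n :=
  Finsupp.supportedQuotEquiv.trans (gradedChainsLEquiv hxy σ p n)

theorem gradedPieceEquiv_mk (hxy : x ≤ y) {n : ℕ} (v : filtF x y σ p n) :
    gradedPieceEquiv hxy σ p n (Submodule.Quotient.mk v) =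
      gradedChainsLEquiv hxy σ p n ((v : HalfOpenCochain x y n).subtypeDomain
        (· ∈ filtChains x y σ p n \ filtChains x y σ (p + 1) n)) :=
  rfl

noncomputable def gradedPieceCoboundary (hσ : Monotone σ) (p : ℤ) (n : ℕ) :
    gradedPiece x y σ p n →ₗ[ℤ] gradedPiece x y σ p (n + 1) :=
  Submodule.mapQ _ _
    ((halfOpenCoboundary x y n).restrict fun _ hv => halfOpenCoboundary_mem_filtF hσ hv)
    fun _ hv => halfOpenCoboundary_mem_filtF hσ hv

theorem gradedPieceEquiv_comp_gradedPieceCoboundary (hxy : x ≤ y) (hσ : StrictMono σ) (n : ℕ) :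
    (gradedPieceEquiv hxy σ p (n + 1)).toLinearMap ∘ₗ gradedPieceCoboundary hσ.monotone p n =
      gradedTargetCoboundary x y σ p n ∘ₗ (gradedPieceEquiv hxy σ p n).toLinearMap := by
  let restrict (m : ℕ) := Finsupp.lsubtypeDomain (M := ℤ) (R := ℤ)
    (filtChains x y σ p m \ filtChains x y σ (p + 1) m)
  have key : Set.EqOn
      ((gradedChainsLEquiv hxy σ p (n + 1)).toLinearMap ∘ₗ restrict (n + 1) ∘ₗ
        halfOpenCoboundary x y n)
      (gradedTargetCoboundary x y σ p n ∘ₗ (gradedChainsLEquiv hxy σ p n).toLinearMap ∘ₗ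
        restrict n)
      ((fun c => Finsupp.single c 1) '' filtChains x y σ p n) := by
    rintro _ ⟨c, hc, rfl⟩
    simp only [LinearMap.comp_apply, Finsupp.lsubtypeDomain_apply, LinearEquiv.coe_coe, restrict]
    by_cases hcp : c ∈ filtChains x y σ (p + 1) n
    · have hc' : Finsupp.single c 1 ∈ filtF x y σ (p + 1) n :=
        Finsupp.single_mem_supported ℤ 1 hcp
      rw [Finsupp.subtypeDomain_diff_eq_zero_of_mem_supported hc',
        Finsupp.subtypeDomain_diff_eq_zero_of_mem_supported
          (halfOpenCoboundary_mem_filtF hσ.monotone hc'), map_zero, map_zero, map_zero]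
    · rw [Finsupp.subtypeDomain_single_of_mem ⟨hc, hcp⟩]
      exact gradedChainsLEquiv_subtypeDomain_halfOpenCoboundary hxy hσ ⟨c, hc, hcp⟩
  refine Submodule.linearMap_qext _ (LinearMap.ext fun ⟨v, hv⟩ => ?_)
  rw [filtF, Finsupp.supported_eq_span_single] at hv
  exact LinearMap.eqOn_span' key hv

end GradedPiece

/-- Let `P` be a finite poset, `x < y` in `P` and `σ : P → ℤ` strictly
increasing.  Filter the reduced order cochain complex `C̃^•` of the half-open interval
`(x,y]` by the submodules `F^p` spanned by the chains whose last element has `σ`-value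
`≥ p` (with the stated convention in degree `-1`).  Then:
(0) `C̃^•` is a cochain complex;
(1) each `F^p` is a subcomplex, and the filtration is decreasing; and
(2) for every `p`, the quotient complex `F^p/F^{p+1}` (with its induced differential
`δbar`) is isomorphic, as a cochain complex of abelian groups, to
`⊕_{x ≤ z ≤ y, σ(z) = p} C̃^{•-1}(x,z)`, via the map sending the class of a chain
`z_0 < ⋯ < z_{d}` with `σ(z_d) = p` to the sequence `x < z_0 < ⋯ < z_d` viewed as a basis
element of `C̃^{d-1}(x, z_d)` (for `d = -1`, the empty chain is sent to the generator of
`C̃^{-2}(x,x) = ℤ` in the summand `z = x`, when `p = σ(x)`). -/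
theorem filtration_gradedPieces_of_halfOpenInterval
    [Fintype P] (x y : P) (hxy : x < y) (σ : P → ℤ) (hσ : StrictMono σ) (p : ℤ) :
    -- (0) the differential squares to zero
    (∀ (n : ℕ) (v : HalfOpenCochain x y n),
        halfOpenCoboundary x y (n + 1) (halfOpenCoboundary x y n v) = 0) ∧
    -- (1) decreasing filtration by subcomplexes
    (∀ (q : ℤ) (n : ℕ), filtF x y σ (q + 1) n ≤ filtF x y σ q n) ∧
    (∀ (q : ℤ) (n : ℕ) (v : HalfOpenCochain x y n),
        v ∈ filtF x y σ q n → halfOpenCoboundary x y n v ∈ filtF x y σ q (n + 1)) ∧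
    -- (2) the associated graded piece, as a complex
    ∃ δbar : ∀ n : ℕ, gradedPiece x y σ p n →ₗ[ℤ] gradedPiece x y σ p (n + 1),
      -- δbar is the differential induced by `halfOpenCoboundary` on the quotient complex
      (∀ (n : ℕ) (v : HalfOpenCochain x y n) (hv : v ∈ filtF x y σ p n)
          (hv' : halfOpenCoboundary x y n v ∈ filtF x y σ p (n + 1)),
          δbar n (Submodule.Quotient.mk ⟨v, hv⟩) =
            Submodule.Quotient.mk ⟨halfOpenCoboundary x y n v, hv'⟩) ∧
      ∃ Φ : ∀ n : ℕ, gradedPiece x y σ p n ≃ₗ[ℤ] gradedTarget x y σ p n,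
        -- Φ is an isomorphism of cochain complexes
        (∀ n : ℕ, (Φ (n + 1)).toLinearMap ∘ₗ δbar n =
            (gradedTargetCoboundary x y σ p n) ∘ₗ (Φ n).toLinearMap) ∧
        -- Φ sends (the class of) a chain `z_0 < ⋯ < z_d` with `σ(z_d) = p` to the
        -- sequence `x < z_0 < ⋯ < z_d`, a basis element of `C̃^{d-1}(x, z_d)`
        (∀ (n : ℕ) (c : HalfOpenChain x y n)
            (h1 : x ≤ lastEntry x c.val) (h2 : lastEntry x c.val ≤ y)
            (h3 : σ (lastEntry x c.val) = p)
            (hc : Finsupp.single c 1 ∈ filtF x y σ p n)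
            (w : IntervalChain x (lastEntry x c.val) n)
            (hw : w.val = Fin.cons x c.val),
            Φ n (Submodule.Quotient.mk ⟨Finsupp.single c 1, hc⟩) =
              DirectSum.lof ℤ _
                (fun z : {z : P // x ≤ z ∧ z ≤ y ∧ σ z = p} => IntervalCochain x z.val n)
                ⟨lastEntry x c.val, h1, h2, h3⟩ (Finsupp.single w 1)) := by
  refine ⟨fun n v => LinearMap.congr_fun (halfOpenCoboundary_comp_self n) v,
    fun _ n => filtF_antitone σ n (Int.le_add_one le_rfl),
    fun _ _ _ hv => halfOpenCoboundary_mem_filtF hσ.monotone hv,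
    gradedPieceCoboundary hσ.monotone p, fun _ _ _ _ => rfl,
    gradedPieceEquiv hxy.le σ p, gradedPieceEquiv_comp_gradedPieceCoboundary hxy.le hσ, ?_⟩
  intro n c h1 h2 h3 hc w hw
  rw [gradedPieceEquiv_mk, Finsupp.subtypeDomain_single_of_mem (mem_filtChains_diff_iff.mpr h3),
    gradedChainsLEquiv_single]
  congr
  exact Subtype.ext hw.symm
end

section
/- Let M be a topological space, I a finite index set, and for each i ∈ I let S_i be a finite set and A_i a closed subset of M^{S_i}. Let S and T be disjoint finite sets. Under the canonical homeomorphism M^{S ⊔ T} ≅ M^S × M^T, the subset F_A(M, S ⊔ T) is contained in F_A(M,S) × F_A(M,T), and its image is an open subset of the subspace F_A(M,S) × F_A(M,T). -/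
/-- The `𝒜`-avoiding configuration space `F_𝒜(M, T)`. -/
def avoidingConfigurationSpace {M : Type*} {ι : Type*} {S : ι → Type*}
    (A : ∀ i, Set (S i → M)) (T : Type*) : Set (T → M) :=
  {x : T → M | ∀ (i : ι) (f : S i → T), Function.Injective f → (x ∘ f) ∉ A i}

lemma isOpen_avoidingConfigurationSpace
    {M : Type*} [TopologicalSpace M] {ι : Type*} [Finite ι]
    {SS : ι → Type*} [∀ i, Finite (SS i)]
    (A : ∀ i, Set (SS i → M)) (hA : ∀ i, IsClosed (A i))
    (T : Type*) [Finite T] :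
    IsOpen (avoidingConfigurationSpace A T) := by
  have h : avoidingConfigurationSpace A T =
      (⋃ i, ⋃ f : SS i → T, ⋃ _ : Function.Injective f, (fun x => x ∘ f) ⁻¹' A i)ᶜ := by
    ext x
    simp [avoidingConfigurationSpace]
  rw [h]
  refine (isClosed_iUnion_of_finite fun i =>
    isClosed_iUnion_of_finite fun f =>
    isClosed_iUnion_of_finite fun _ =>
    (hA i).preimage ?_).isOpen_compl
  exact continuous_pi fun s => continuous_apply (f s)

/-- Let `M` be a topological space, `ι` a finite index set, and for each
`i` let `S i` be a finite set and `A i` a closed subset of `M ^ (S i)`.  Let `S`, `T` be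
disjoint finite sets (modelled by the disjoint union `S ⊕ T`).  Under the canonical
homeomorphism `M ^ (S ⊔ T) ≅ M ^ S × M ^ T` (which we record by asserting that the
canonical bijection is continuous in both directions), the subset `F_𝒜(M, S ⊔ T)` is
contained in `F_𝒜(M, S) × F_𝒜(M, T)`, and its image is an open subset of the subspace
`F_𝒜(M, S) × F_𝒜(M, T)`. -/
theorem avoidingConfigurationSpace_image_openEmbedding
    {M : Type*} [TopologicalSpace M] {ι : Type*} [Finite ι]
    {SS : ι → Type*} [∀ i, Finite (SS i)]
    (A : ∀ i, Set (SS i → M)) (hA : ∀ i, IsClosed (A i))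
    (S T : Type*) [Finite S] [Finite T] :
    Continuous (Equiv.sumArrowEquivProdArrow S T M) ∧
    Continuous (Equiv.sumArrowEquivProdArrow S T M).symm ∧
    (Equiv.sumArrowEquivProdArrow S T M) '' (avoidingConfigurationSpace A (S ⊕ T)) ⊆
      (avoidingConfigurationSpace A S) ×ˢ (avoidingConfigurationSpace A T) ∧
    IsOpen {z : ↥((avoidingConfigurationSpace A S) ×ˢ (avoidingConfigurationSpace A T)) |
      (z : (S → M) × (T → M)) ∈
        (Equiv.sumArrowEquivProdArrow S T M) '' (avoidingConfigurationSpace A (S ⊕ T))} := by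
  have hcont : Continuous (Equiv.sumArrowEquivProdArrow S T M) := by
    refine Continuous.prodMk ?_ ?_ <;>
      exact continuous_pi fun s => continuous_apply _
  have hcont' : Continuous (Equiv.sumArrowEquivProdArrow S T M).symm := by
    refine continuous_pi fun s => ?_
    cases s with
    | inl s => exact (continuous_apply s).comp continuous_fst
    | inr t => exact (continuous_apply t).comp continuous_snd
  refine ⟨hcont, hcont', ?_, ?_⟩
  · rintro _ ⟨x, hx, rfl⟩
    constructor
    · intro i f hf
      exact hx i (Sum.inl ∘ f) (Sum.inl_injective.comp hf)
    · intro i f hf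
      exact hx i (Sum.inr ∘ f) (Sum.inr_injective.comp hf)
  · have hset : {z : ↥((avoidingConfigurationSpace A S) ×ˢ (avoidingConfigurationSpace A T)) |
        (z : (S → M) × (T → M)) ∈
          (Equiv.sumArrowEquivProdArrow S T M) '' (avoidingConfigurationSpace A (S ⊕ T))} =
        (fun z : ↥((avoidingConfigurationSpace A S) ×ˢ (avoidingConfigurationSpace A T)) =>
          (Equiv.sumArrowEquivProdArrow S T M).symm (z : (S → M) × (T → M))) ⁻¹'
          (avoidingConfigurationSpace A (S ⊕ T)) := by
      ext z
      simp [Equiv.image_eq_preimage_symm]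
    rw [hset]
    exact (isOpen_avoidingConfigurationSpace A hA (S ⊕ T)).preimage
      (hcont'.comp continuous_subtype_val)
end

section
/- Let R be a commutative ring and let C be the symmetric monoidal category of R-modules. Then the category of left modules over the commutative monoid Com in the Day-convolution symmetric monoidal category of species in C is equivalent to the category of FI-modules in C, i.e. the functor category from FI to C. Under this equivalence, a Com-module M acquires, for each inclusion S ⊂ T of finite sets, the transition map M(S) ≅ M(S) ⊗ Com(T∖S) → M(T) induced by the module structure. -/
open CategoryTheory

/-- The groupoid `𝐁` of finite sets and bijections. -/
structure BijCat : Type 1 where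
  /-- the underlying finite set -/
  carrier : Type
  [fintype : Fintype carrier]

attribute [instance] BijCat.fintype

instance : CoeSort BijCat Type := ⟨BijCat.carrier⟩

instance : Category BijCat where
  Hom X Y := X ≃ Y
  id X := Equiv.refl X
  comp f g := f.trans g
  id_comp f := Equiv.refl_trans f
  comp_id f := Equiv.trans_refl f
  assoc f g h := (Equiv.trans_assoc f g h).symm

/-- The disjoint union of two finite sets. -/
def sumObj (X Y : BijCat) : BijCat := { carrier := Sum X Y }

/-- The empty finite set. -/
def emptyObj : BijCat := { carrier := PEmpty }

variable (R : Type) [CommRing R]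

/-- A left module, in the Day-convolution symmetric monoidal category of species in
`R`-modules, over the commutative monoid `Com` (whose value on every finite set is the
monoidal unit `R`, with multiplications the canonical isomorphisms `R ⊗ R ≅ R`),
presented explicitly: since `(Com ⊗ M)(S) = ⊕_{S = T₁ ⊔ T₂} Com(T₁) ⊗ M(T₂)` and
`Com(T₁) ⊗ M(T₂) ≅ M(T₂)`, the action is determined by maps `M(X) → M(X ⊔ Y)`, natural
in bijections in both variables, which are unital and associative. -/
structure ComModule where
  /-- the underlying species -/
  V : BijCat ⥤ ModuleCat.{0} R
  /-- the `Com`-action `M(X) ≅ M(X) ⊗ Com(Y) → M(X ⊔ Y)` -/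
  act : ∀ X Y : BijCat, V.obj X ⟶ V.obj (sumObj X Y)
  act_unit : ∀ X : BijCat,
    act X emptyObj = V.map ((Equiv.sumEmpty X.carrier PEmpty).symm : X ⟶ sumObj X emptyObj)
  act_assoc : ∀ X Y Z : BijCat,
    act X Y ≫ act (sumObj X Y) Z =
      act X (sumObj Y Z) ≫
        V.map ((Equiv.sumAssoc X.carrier Y.carrier Z.carrier).symm :
          sumObj X (sumObj Y Z) ⟶ sumObj (sumObj X Y) Z)
  act_natural : ∀ (X X' Y Y' : BijCat) (e : X ⟶ X') (f : Y ⟶ Y'),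
    act X Y ≫ V.map ((Equiv.sumCongr e f) : sumObj X Y ⟶ sumObj X' Y') =
      V.map e ≫ act X' Y'

/-- A morphism of `Com`-modules: a morphism of species compatible with the action. -/
@[ext]
structure ComModuleHom (M N : ComModule R) where
  /-- the underlying morphism of species -/
  τ : M.V ⟶ N.V
  compat : ∀ X Y : BijCat,
    M.act X Y ≫ τ.app (sumObj X Y) = τ.app X ≫ N.act X Y

instance : Category (ComModule R) where
  Hom M N := ComModuleHom R M N
  id M := ⟨𝟙 M.V, by intro X Y; simp⟩
  comp f g := ⟨f.τ ≫ g.τ, by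
    intro X Y
    simp only [NatTrans.comp_app]
    rw [← Category.assoc, f.compat, Category.assoc, g.compat, ← Category.assoc]⟩
  id_comp f := by apply ComModuleHom.ext; simp
  comp_id f := by apply ComModuleHom.ext; simp
  assoc f g h := by apply ComModuleHom.ext; simp

/-- The category `FI` of finite sets and injections. -/
structure FinInjCat : Type 1 where
  /-- the underlying finite set -/
  carrier : Type
  [fintype : Fintype carrier]

attribute [instance] FinInjCat.fintype

instance : CoeSort FinInjCat Type := ⟨FinInjCat.carrier⟩

instance : Category FinInjCat where
  Hom X Y := X ↪ Y
  id X := Function.Embedding.refl X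
  comp f g := f.trans g

/-- A finite set with bijections, regarded as an object of `FI`. -/
def toFinInj (X : BijCat) : FinInjCat := { carrier := X.carrier }

/-- The canonical inclusion `X ⊆ X ⊔ Y`, as a morphism of `FI`. -/
def inlEmb (X Y : BijCat) : toFinInj X ⟶ toFinInj (sumObj X Y) :=
  ⟨Sum.inl, Sum.inl_injective⟩

/-!
An injection `f : X ↪ T` is, up to a bijection of the complement, the inclusion
`X ⊆ X ⊔ (T ∖ f(X))` followed by a bijection onto `T`; so a `Com`-module, i.e. a unital,
associative action `M(X) → M(X ⊔ Y)` natural in both variables, defines a map `M(X) → M(T)` by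
acting with the complement and transporting. Naturality in the complement makes the result
independent of the chosen decomposition; with this, associativity of the action gives
functoriality on composites and unitality makes bijections act as in the species. Conversely an
FI-module restricts to a species and acts along the inclusions `X ⊆ X ⊔ Y`, and the two
constructions are mutually inverse on the nose.
-/

abbrev bijToFinInj : BijCat ⥤ FinInjCat where
  obj := toFinInj
  map e := Equiv.toEmbedding e

namespace BijCat

def sumMap {X X' Y Y' : BijCat} (e : X ⟶ X') (f : Y ⟶ Y') : sumObj X Y ⟶ sumObj X' Y' :=
  Equiv.sumCongr e f

def sumAssocInv (X Y Z : BijCat) : sumObj X (sumObj Y Z) ⟶ sumObj (sumObj X Y) Z :=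
  (Equiv.sumAssoc X Y Z).symm

def sumEmptyIso (X : BijCat) : X ≅ sumObj X emptyObj where
  hom := (Equiv.sumEmpty X PEmpty).symm
  inv := Equiv.sumEmpty X PEmpty
  hom_inv_id := Equiv.self_trans_symm _
  inv_hom_id := Equiv.symm_trans_self _

noncomputable def rangeCompl {X T : BijCat} (f : toFinInj X ⟶ toFinInj T) : BijCat :=
  { carrier := ↥(Set.range (show X ↪ T from f))ᶜ, fintype := Fintype.ofFinite _ }

noncomputable def sumRangeCompl {X T : BijCat} (f : toFinInj X ⟶ toFinInj T) :
    sumObj X (rangeCompl f) ⟶ T :=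
  open Classical in
  let φ : X ↪ T := f
  (Equiv.sumCongr (Equiv.ofInjective φ φ.injective) (Equiv.refl _)).trans
    (Equiv.Set.sumCompl (Set.range φ))

lemma inlEmb_comp_map_sumRangeCompl {X T : BijCat} (f : toFinInj X ⟶ toFinInj T) :
    inlEmb X (rangeCompl f) ≫ bijToFinInj.map (sumRangeCompl f) = f :=
  rfl

noncomputable def toRangeCompl {X Y T : BijCat} (e : sumObj X Y ⟶ T) :
    Y ⟶ rangeCompl (inlEmb X Y ≫ bijToFinInj.map e) :=
  let ε : X ⊕ Y ≃ T := e
  Equiv.ofBijective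
    (fun y => Subtype.mk (ε (Sum.inr y)) <| by
      rintro ⟨x, hx⟩; exact Sum.inl_ne_inr (ε.injective hx)) <| by
    refine ⟨fun y y' h => Sum.inr_injective (ε.injective (congrArg Subtype.val h)), ?_⟩
    rintro ⟨t, ht⟩
    obtain ⟨x | y, rfl⟩ := ε.surjective t
    · exact (ht ⟨x, rfl⟩).elim
    · exact ⟨y, rfl⟩

lemma sumMap_toRangeCompl_comp_sumRangeCompl {X Y T : BijCat} (e : sumObj X Y ⟶ T) :
    sumMap (𝟙 X) (toRangeCompl e) ≫ sumRangeCompl _ = e :=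
  Equiv.ext <| by rintro (x | y) <;> rfl

end BijCat

open BijCat

namespace ComModule

variable {R} (M : ComModule R)

@[ext]
lemma hom_ext {M N : ComModule R} {u v : M ⟶ N} (h : u.τ = v.τ) : u = v :=
  ComModuleHom.ext h

def isoMk {M N : ComModule R} (α : M.V ≅ N.V)
    (h : ∀ X Y, M.act X Y ≫ α.hom.app (sumObj X Y) = α.hom.app X ≫ N.act X Y) :
    M ≅ N where
  hom := ⟨α.hom, h⟩
  inv := ⟨α.inv, fun X Y => by
    rw [← cancel_epi (α.hom.app X), ← reassoc_of% (h X Y)]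
    simp⟩
  hom_inv_id := by ext1; exact α.hom_inv_id
  inv_hom_id := by ext1; exact α.inv_hom_id

-- The axioms of `ComModule` with their coercions from `Equiv` replaced by named morphisms of
-- `BijCat`, so that rewriting with them produces terms `rw` can still match.
lemma act_emptyObj (X : BijCat) : M.act X emptyObj = M.V.map (sumEmptyIso X).hom :=
  M.act_unit X

lemma act_comp_act (X Y Z : BijCat) :
    M.act X Y ≫ M.act (sumObj X Y) Z = M.act X (sumObj Y Z) ≫ M.V.map (sumAssocInv X Y Z) :=
  M.act_assoc X Y Z

lemma act_comp_map_sumMap {X X' Y Y' : BijCat} (e : X ⟶ X') (f : Y ⟶ Y') :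
    M.act X Y ≫ M.V.map (sumMap e f) = M.V.map e ≫ M.act X' Y' :=
  M.act_natural X X' Y Y' e f

/-- `M(X) ≅ M(X) ⊗ Com(T ∖ f(X)) → M(X ⊔ (T ∖ f(X))) ≅ M(T)`. -/
noncomputable def transition {X T : BijCat} (f : toFinInj X ⟶ toFinInj T) :
    M.V.obj X ⟶ M.V.obj T :=
  M.act X (rangeCompl f) ≫ M.V.map (sumRangeCompl f)

/-- By naturality of the action in `Y`, acting by `Y` and transporting along `X ⊔ Y ≃ T` only
depends on the induced injection `X ↪ T`. -/
lemma act_comp_map {X Y T : BijCat} (e : sumObj X Y ⟶ T) :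
    M.act X Y ≫ M.V.map e = M.transition (inlEmb X Y ≫ bijToFinInj.map e) := by
  conv_lhs => rw [← sumMap_toRangeCompl_comp_sumRangeCompl e, M.V.map_comp,
    reassoc_of% M.act_comp_map_sumMap, M.V.map_id, Category.id_comp]
  rfl

lemma transition_inlEmb (X Y : BijCat) : M.transition (inlEmb X Y) = M.act X Y := by
  have h := M.act_comp_map (𝟙 (sumObj X Y))
  rw [M.V.map_id, Category.comp_id] at h
  exact h.symm

lemma transition_map {X T : BijCat} (e : X ⟶ T) :
    M.transition (bijToFinInj.map e) = M.V.map e := by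
  rw [← Iso.hom_inv_id_assoc (sumEmptyIso X) e, M.V.map_comp, ← act_emptyObj, act_comp_map]
  rfl

lemma transition_comp {X T U : BijCat} (f : toFinInj X ⟶ toFinInj T)
    (g : toFinInj T ⟶ toFinInj U) :
    M.transition (f ≫ g) = M.transition f ≫ M.transition g := by
  let e := sumAssocInv X (rangeCompl f) (rangeCompl g) ≫
    sumMap (sumRangeCompl f) (𝟙 (rangeCompl g)) ≫ sumRangeCompl g
  calc M.transition (f ≫ g)
      = M.transition (inlEmb X _ ≫ bijToFinInj.map e) := rfl
    _ = M.act X _ ≫ M.V.map e := (M.act_comp_map e).symm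
    _ = M.act X (rangeCompl f) ≫ M.act _ (rangeCompl g) ≫
          M.V.map (sumMap (sumRangeCompl f) (𝟙 _)) ≫ M.V.map (sumRangeCompl g) := by
      simp only [e, M.V.map_comp, reassoc_of% M.act_comp_act]
    _ = M.transition f ≫ M.transition g := by
      simp only [transition, reassoc_of% M.act_comp_map_sumMap, Category.assoc]

lemma transition_naturality {M N : ComModule R} (u : M ⟶ N) {X T : BijCat}
    (f : toFinInj X ⟶ toFinInj T) :
    M.transition f ≫ u.τ.app T = u.τ.app X ≫ N.transition f := by
  rw [transition, Category.assoc, u.τ.naturality, ← Category.assoc, u.compat, Category.assoc,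
    transition]

noncomputable def toFI : FinInjCat ⥤ ModuleCat.{0} R where
  obj S := M.V.obj ⟨S⟩
  map {S S'} f := M.transition (X := ⟨S⟩) (T := ⟨S'⟩) f
  map_id S := (M.transition_map (𝟙 (⟨S⟩ : BijCat))).trans (M.V.map_id _)
  map_comp {S S' S''} f g := M.transition_comp (X := ⟨S⟩) (T := ⟨S'⟩) (U := ⟨S''⟩) f g

noncomputable def toFIFunctor : ComModule R ⥤ (FinInjCat ⥤ ModuleCat.{0} R) where
  obj M := M.toFI
  map u :=
    { app S := u.τ.app ⟨S⟩
      naturality S S' f := transition_naturality u (X := ⟨S⟩) (T := ⟨S'⟩) f }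

def ofFI (N : FinInjCat ⥤ ModuleCat.{0} R) : ComModule R where
  V := bijToFinInj ⋙ N
  act X Y := N.map (inlEmb X Y)
  act_unit _ := rfl
  act_assoc X Y Z := (N.map_comp _ _).symm.trans
    (N.map_comp (inlEmb X (sumObj Y Z)) (bijToFinInj.map (sumAssocInv X Y Z)))
  act_natural _ X' _ Y' e _ :=
    (N.map_comp _ _).symm.trans (N.map_comp (bijToFinInj.map e) (inlEmb X' Y'))

lemma ofFI_transition (N : FinInjCat ⥤ ModuleCat.{0} R) {X T : BijCat}
    (f : toFinInj X ⟶ toFinInj T) : (ofFI N).transition f = N.map f :=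
  (N.map_comp _ _).symm.trans (congrArg N.map (inlEmb_comp_map_sumRangeCompl f))

def ofFIFunctor : (FinInjCat ⥤ ModuleCat.{0} R) ⥤ ComModule R where
  obj := ofFI
  map η := ⟨Functor.whiskerLeft bijToFinInj η, fun X Y => η.naturality (inlEmb X Y)⟩

noncomputable def equivFI : ComModule R ≌ (FinInjCat ⥤ ModuleCat.{0} R) :=
  CategoryTheory.Equivalence.mk toFIFunctor ofFIFunctor
    (NatIso.ofComponents
      (fun M => isoMk (NatIso.ofComponents (fun X => Iso.refl (M.V.obj X))
        fun e => (Category.comp_id _).trans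
          ((M.transition_map e).symm.trans (Category.id_comp _).symm))
        fun X Y => (Category.comp_id _).trans
          ((M.transition_inlEmb X Y).symm.trans (Category.id_comp _).symm))
      fun u => by ext X : 3; exact (Category.comp_id _).trans (Category.id_comp _).symm)
    (NatIso.ofComponents
      (fun N => NatIso.ofComponents (fun S => Iso.refl (N.obj S))
        fun {S S'} f => (Category.comp_id _).trans
          ((ofFI_transition N (X := ⟨S⟩) (T := ⟨S'⟩) f).trans (Category.id_comp _).symm))
      fun η => by ext S : 2; exact (Category.comp_id _).trans (Category.id_comp _).symm)

end ComModule

/-- Let `R` be a commutative ring.  The category of left modules over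
the commutative monoid `Com` in the Day-convolution symmetric monoidal category of
species in `R`-modules is equivalent to the category of FI-modules in `R`-modules, i.e.
the functor category from `FI` to `R`-modules.  Under this equivalence, a `Com`-module
`M` acquires, for each inclusion `S ⊆ T` of finite sets (it suffices to consider the
canonical inclusions `X ⊆ X ⊔ Y`), the transition map
`M(S) ≅ M(S) ⊗ Com(T∖S) → M(T)` induced by the module structure. -/
theorem comModule_equivalence_FIModules :
    ∃ E : ComModule R ≌ (FinInjCat ⥤ ModuleCat.{0} R),
      ∀ (M : ComModule R) (X Y : BijCat),
        ∃ (h1 : (E.functor.obj M).obj (toFinInj X) = M.V.obj X)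
          (h2 : (E.functor.obj M).obj (toFinInj (sumObj X Y)) = M.V.obj (sumObj X Y)),
          (E.functor.obj M).map (inlEmb X Y) =
            eqToHom h1 ≫ M.act X Y ≫ eqToHom h2.symm :=
  ⟨ComModule.equivFI, fun M X Y =>
    ⟨rfl, rfl, by
      show M.transition (inlEmb X Y) = 𝟙 _ ≫ M.act X Y ≫ 𝟙 _
      rw [Category.id_comp, Category.comp_id, M.transition_inlEmb]⟩⟩
end

section
/- Let R be a commutative ring and let A be a twisted commutative algebra in ℤ-graded R-modules, with A^i(n) denoting the degree-i component of its arity-n part. Suppose A has a generating set {a_0, a_1, a_2, …} (i.e., the smallest sub-tca containing these homogeneous elements is A itself) such that a_0 ∈ A^0(1), deg(a_i) < 0 for all i ≥ 1, and lim_{i → ∞} deg(a_i) = −∞ (equivalently, for every integer N only finitely many generators have degree ≥ N). Then for each i ∈ ℤ, the FI-module n ↦ A^i(n), with structure maps given by multiplication by a_0, is finitely generated; indeed it is generated by the finitely many monomials of degree i in the generators a_1, a_2, …. -/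
/-- Transport an element of `A m i` along equalities of the indices. -/
def gcast {A : ℕ → ℤ → Type*} {m n : ℕ} {i j : ℤ} (h : m = n) (h' : i = j)
    (a : A m i) : A n j :=
  _root_.cast (by rw [h, h']) a

/-- The "block sum" permutation `π ⊕ τ` of `Fin (m + n)`, acting as `π` on the first `m`
elements and as `τ` on the last `n` elements. -/
def blockSum {m n : ℕ} (π : Equiv.Perm (Fin m)) (τ : Equiv.Perm (Fin n)) :
    Equiv.Perm (Fin (m + n)) :=
  (finSumFinEquiv.symm.trans (π.sumCongr τ)).trans finSumFinEquiv

/-- The "block transposition" of `Fin (m + n)` interchanging the first block of `m`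
elements with the last block of `n` elements. -/
def blockSwap (m n : ℕ) : Equiv.Perm (Fin (m + n)) :=
  (finAddFlip : Fin (m + n) ≃ Fin (n + m)).trans (finCongr (Nat.add_comm n m))

/-- A twisted commutative algebra in `ℤ`-graded `R`-modules (presented on the skeleton of
the category of finite sets and bijections): a sequence of `ℤ`-graded symmetric-group
representations `A(n) = ⊕_i A^i(n)` together with a unit and `S_m × S_n`-equivariant
multiplication maps `A^i(m) ⊗ A^j(n) → A^{i+j}(m+n)`, commutative up to the Koszul sign
`(-1)^{ij}` and the block transposition, and associative. -/
structure GradedTCA (R : Type*) [CommRing R] (A : ℕ → ℤ → Type*)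
    [∀ n i, AddCommGroup (A n i)] [∀ n i, Module R (A n i)] where
  /-- the unit element `1 ∈ A^0(0)` -/
  one : A 0 0
  /-- the action of the symmetric group `S_n` on `A^i(n)` -/
  ρ : ∀ (n : ℕ) (i : ℤ), Equiv.Perm (Fin n) →* (A n i ≃ₗ[R] A n i)
  /-- the multiplication maps -/
  mul : ∀ (m n : ℕ) (i j : ℤ), A m i →ₗ[R] A n j →ₗ[R] A (m + n) (i + j)
  one_mul : ∀ (n : ℕ) (i : ℤ) (a : A n i),
    mul 0 n 0 i one a = gcast (Nat.zero_add n).symm (zero_add i).symm a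
  mul_assoc : ∀ (m n k : ℕ) (i j l : ℤ) (a : A m i) (b : A n j) (c : A k l),
    mul (m + n) k (i + j) l (mul m n i j a b) c =
      gcast (Nat.add_assoc m n k).symm (add_assoc i j l).symm
        (mul m (n + k) i (j + l) a (mul n k j l b c))
  mul_comm : ∀ (m n : ℕ) (i j : ℤ) (a : A m i) (b : A n j),
    mul m n i j a b =
      ((Int.negOnePow (i * j) : ℤˣ) : ℤ) •
        ρ (m + n) (i + j) (blockSwap m n)
          (gcast (Nat.add_comm n m) (add_comm j i) (mul n m j i b a))
  mul_equivariant : ∀ (m n : ℕ) (i j : ℤ) (π : Equiv.Perm (Fin m))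
      (τ : Equiv.Perm (Fin n)) (a : A m i) (b : A n j),
    mul m n i j (ρ m i π a) (ρ n j τ b) = ρ (m + n) (i + j) (blockSum π τ) (mul m n i j a b)

/-- A family of submodules `W n i ≤ A^i(n)` is a sub-tca if it contains the unit and is
closed under the symmetric group actions and the multiplication. -/
structure IsSubTCA {R : Type*} [CommRing R] {A : ℕ → ℤ → Type*}
    [∀ n i, AddCommGroup (A n i)] [∀ n i, Module R (A n i)] (T : GradedTCA R A)
    (W : ∀ n i, Submodule R (A n i)) : Prop where
  one_mem : T.one ∈ W 0 0
  perm_mem : ∀ (n : ℕ) (i : ℤ) (π : Equiv.Perm (Fin n)) (a : A n i),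
    a ∈ W n i → T.ρ n i π a ∈ W n i
  mul_mem : ∀ (m n : ℕ) (i j : ℤ) (a : A m i) (b : A n j),
    a ∈ W m i → b ∈ W n j → T.mul m n i j a b ∈ W (m + n) (i + j)

/-! Every element of the sub-tca generated by `a₀` and the `g k` is a linear combination of
normal forms `σ · (g k₁ ⋯ g kₛ · a₀ʳ)`: a product of two normal forms is brought back into this
shape by associativity, equivariance and commutativity, where `a₀`, being of degree `0`, commutes
with everything up to a block transposition and no sign. Since all `g k` have negative degree and
only finitely many have degree `≥ i`, only finitely many monomials `g k₁ ⋯ g kₛ` have degree `i`,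
and the normal forms of degree `i` are exactly the images of these under the FI-structure maps. -/

theorem gcast_gcast {A : ℕ → ℤ → Type*} {m n p : ℕ} {i j l : ℤ} (h₁ : m = n) (h₁' : i = j)
    (h₂ : n = p) (h₂' : j = l) (a : A m i) :
    gcast (A := A) h₂ h₂' (gcast h₁ h₁' a) = gcast (h₁.trans h₂) (h₁'.trans h₂') a := by
  subst h₁ h₁'; rfl

def gcastₗ (R : Type*) [CommRing R] {A : ℕ → ℤ → Type*} [∀ n i, AddCommGroup (A n i)]
    [∀ n i, Module R (A n i)] {m n : ℕ} {i j : ℤ} (h : m = n) (h' : i = j) :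
    A m i ≃ₗ[R] A n j where
  toFun := gcast h h'
  invFun := gcast h.symm h'.symm
  map_add' _ _ := by subst h h'; rfl
  map_smul' _ _ := by subst h h'; rfl
  left_inv _ := by subst h h'; rfl
  right_inv _ := by subst h h'; rfl

namespace GradedTCA

variable {R : Type*} [CommRing R] {A : ℕ → ℤ → Type*}
  [∀ n i, AddCommGroup (A n i)] [∀ n i, Module R (A n i)] (T : GradedTCA R A)

theorem ρ_one_apply {n : ℕ} {i : ℤ} (a : A n i) : T.ρ n i 1 a = a := by
  rw [map_one]; rfl

theorem ρ_ρ_apply {n : ℕ} {i : ℤ} (π τ : Equiv.Perm (Fin n)) (a : A n i) :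
    T.ρ n i π (T.ρ n i τ a) = T.ρ n i (π * τ) a := by
  rw [map_mul]; rfl

theorem ρ_gcast {m n : ℕ} {i j : ℤ} (h : m = n) (h' : i = j) (π : Equiv.Perm (Fin n))
    (a : A m i) :
    T.ρ n j π (gcast h h' a) = gcast h h' (T.ρ m i ((finCongr h).permCongr.symm π) a) := by
  subst h h'; rfl

theorem gcast_ρ_of_arity_eq {m : ℕ} {i j : ℤ} (h' : i = j) (π : Equiv.Perm (Fin m))
    (a : A m i) : gcast rfl h' (T.ρ m i π a) = T.ρ m j π (gcast rfl h' a) := by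
  subst h'; rfl

theorem mul_gcast_left {m m' n : ℕ} {i i' j : ℤ} (h : m = m') (h' : i = i')
    (a : A m i) (b : A n j) :
    T.mul m' n i' j (gcast h h' a) b = gcast (by rw [h]) (by rw [h']) (T.mul m n i j a b) := by
  subst h h'; rfl

theorem mul_gcast_right {m n n' : ℕ} {i j j' : ℤ} (h : n = n') (h' : j = j')
    (a : A m i) (b : A n j) :
    T.mul m n' i j' a (gcast h h' b) = gcast (by rw [h]) (by rw [h']) (T.mul m n i j a b) := by
  subst h h'; rfl

theorem mul_ρ_left {m n : ℕ} {i j : ℤ} (π : Equiv.Perm (Fin m)) (a : A m i) (b : A n j) :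
    T.mul m n i j (T.ρ m i π a) b = T.ρ (m + n) (i + j) (blockSum π 1) (T.mul m n i j a b) := by
  rw [← T.mul_equivariant, ρ_one_apply]

theorem mul_ρ_right {m n : ℕ} {i j : ℤ} (τ : Equiv.Perm (Fin n)) (a : A m i) (b : A n j) :
    T.mul m n i j a (T.ρ n j τ b) = T.ρ (m + n) (i + j) (blockSum 1 τ) (T.mul m n i j a b) := by
  rw [← T.mul_equivariant, ρ_one_apply]

theorem mul_comm_of_degree_zero {m n : ℕ} {j : ℤ} (a : A m 0) (b : A n j) :
    T.mul m n 0 j a b = T.ρ (m + n) (0 + j) (blockSwap m n)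
      (gcast (Nat.add_comm n m) (add_comm j 0) (T.mul n m j 0 b a)) := by
  simpa [Int.negOnePow] using T.mul_comm m n 0 j a b

theorem mul_one {m : ℕ} {j : ℤ} (a : A m j) :
    T.mul m 0 j 0 a T.one =
      T.ρ (m + 0) (j + 0) (blockSwap m 0) (gcast rfl (add_zero j).symm a) := by
  simpa [Int.negOnePow, T.one_mul, gcast_gcast] using T.mul_comm m 0 j 0 a T.one

section NormalForms

variable (a0 : A 1 0) {κ : Type*} {ar : κ → ℕ} {deg : κ → ℤ} (g : ∀ k, A (ar k) (deg k))

def mulA0 {m : ℕ} {j : ℤ} : A m j →ₗ[R] A (m + 1) j :=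
  (gcastₗ R rfl (add_zero j)).toLinearMap ∘ₗ (T.mul m 1 j 0).flip a0

theorem mulA0_apply {m : ℕ} {j : ℤ} (x : A m j) :
    T.mulA0 a0 x = gcast rfl (add_zero j) (T.mul m 1 j 0 x a0) := rfl

def mulA0Pow : (r : ℕ) → {m : ℕ} → {j : ℤ} → A m j → A (m + r) j
  | 0, _, _, x => x
  | r + 1, _, _, x => T.mulA0 a0 (mulA0Pow r x)

def monomial : (L : List κ) → A (L.map ar).sum (L.map deg).sum
  | [] => T.one
  | k :: L => T.mul _ _ _ _ (g k) (monomial L)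

theorem mulA0_gcast {m m' : ℕ} {j j' : ℤ} (h : m = m') (h' : j = j') (x : A m j) :
    T.mulA0 a0 (gcast h h' x) = gcast (by rw [h]) h' (T.mulA0 a0 x) := by
  subst h h'; rfl

theorem mulA0_ρ {m : ℕ} {j : ℤ} (π : Equiv.Perm (Fin m)) (x : A m j) :
    T.mulA0 a0 (T.ρ m j π x) = T.ρ (m + 1) j (blockSum π 1) (T.mulA0 a0 x) := by
  rw [mulA0_apply, mul_ρ_left, gcast_ρ_of_arity_eq]
  rfl

theorem mul_mulA0 {m n : ℕ} {j j' : ℤ} (x : A m j) (y : A n j') :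
    T.mul m (n + 1) j j' x (T.mulA0 a0 y) = T.mulA0 a0 (T.mul m n j j' x y) := by
  rw [mulA0_apply, mulA0_apply, mul_gcast_right, T.mul_assoc, gcast_gcast]

theorem mul_mulA0Pow (s : ℕ) {m n : ℕ} {j j' : ℤ} (x : A m j) (y : A n j') :
    T.mul m (n + s) j j' x (T.mulA0Pow a0 s y) =
      gcast (Nat.add_assoc m n s) rfl (T.mulA0Pow a0 s (T.mul m n j j' x y)) := by
  induction s with
  | zero => rfl
  | succ s ih =>
    show T.mul m (n + s + 1) j j' x (T.mulA0 a0 (T.mulA0Pow a0 s y)) = _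
    rw [mul_mulA0, ih, mulA0_gcast]
    rfl

def normalForms (n : ℕ) (j : ℤ) : Set (A n j) :=
  { z | ∃ (L : List κ) (r : ℕ) (π : Equiv.Perm (Fin ((L.map ar).sum + r)))
      (h : (L.map ar).sum + r = n) (h' : (L.map deg).sum = j),
      z = gcast h h' (T.ρ _ _ π (T.mulA0Pow a0 r (T.monomial g L))) }

def normalSpan (n : ℕ) (j : ℤ) : Submodule R (A n j) :=
  Submodule.span R (T.normalForms a0 g n j)

theorem normalForm_mem_normalSpan (L : List κ) (r : ℕ)
    (π : Equiv.Perm (Fin ((L.map ar).sum + r))) {n : ℕ} {j : ℤ}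
    (h : (L.map ar).sum + r = n) (h' : (L.map deg).sum = j) :
    gcast h h' (T.ρ _ _ π (T.mulA0Pow a0 r (T.monomial g L))) ∈ T.normalSpan a0 g n j :=
  Submodule.subset_span ⟨L, r, π, h, h', rfl⟩

theorem mulA0Pow_monomial_mem_normalSpan (L : List κ) (r : ℕ) {n : ℕ} {j : ℤ}
    (h : (L.map ar).sum + r = n) (h' : (L.map deg).sum = j) :
    gcast h h' (T.mulA0Pow a0 r (T.monomial g L)) ∈ T.normalSpan a0 g n j := by
  simpa only [ρ_one_apply] using T.normalForm_mem_normalSpan a0 g L r 1 h h'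

theorem map_mem_normalSpan {m n : ℕ} {j j' : ℤ} (f : A m j →ₗ[R] A n j')
    (hf : ∀ z ∈ T.normalForms a0 g m j, f z ∈ T.normalSpan a0 g n j')
    {x : A m j} (hx : x ∈ T.normalSpan a0 g m j) : f x ∈ T.normalSpan a0 g n j' :=
  (Submodule.span_le (p := (T.normalSpan a0 g n j').comap f)).mpr hf hx

theorem gcast_mem_normalSpan {m n : ℕ} {j j' : ℤ} (h : m = n) (h' : j = j') {x : A m j}
    (hx : x ∈ T.normalSpan a0 g m j) : gcast h h' x ∈ T.normalSpan a0 g n j' := by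
  subst h h'; exact hx

theorem ρ_mem_normalSpan {n : ℕ} {j : ℤ} (π : Equiv.Perm (Fin n)) {x : A n j}
    (hx : x ∈ T.normalSpan a0 g n j) : T.ρ n j π x ∈ T.normalSpan a0 g n j := by
  refine T.map_mem_normalSpan a0 g (T.ρ n j π).toLinearMap ?_ hx
  rintro _ ⟨L, r, σ, h, h', rfl⟩
  rw [LinearEquiv.coe_coe, ρ_gcast, ρ_ρ_apply]
  exact T.normalForm_mem_normalSpan a0 g L r _ h h'

theorem mulA0_mem_normalSpan {m : ℕ} {j : ℤ} {x : A m j} (hx : x ∈ T.normalSpan a0 g m j) :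
    T.mulA0 a0 x ∈ T.normalSpan a0 g (m + 1) j := by
  refine T.map_mem_normalSpan a0 g (T.mulA0 a0) ?_ hx
  rintro _ ⟨L, r, π, h, h', rfl⟩
  rw [mulA0_gcast, mulA0_ρ]
  exact T.normalForm_mem_normalSpan a0 g L (r + 1) (blockSum (n := 1) π 1) (by omega) h'

theorem a0_mul_mem_normalSpan {n : ℕ} {j : ℤ} {x : A n j} (hx : x ∈ T.normalSpan a0 g n j) :
    T.mul 1 n 0 j a0 x ∈ T.normalSpan a0 g (1 + n) (0 + j) := by
  rw [mul_comm_of_degree_zero]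
  refine T.ρ_mem_normalSpan a0 g _ (T.gcast_mem_normalSpan a0 g _ _ ?_)
  have hmul : T.mul n 1 j 0 x a0 = gcast rfl (add_zero j).symm (T.mulA0 a0 x) := by
    rw [mulA0_apply, gcast_gcast]; rfl
  rw [hmul]
  exact T.gcast_mem_normalSpan a0 g rfl _ (T.mulA0_mem_normalSpan a0 g hx)

theorem generator_mul_mem_normalSpan (k : κ) {n : ℕ} {j : ℤ} {x : A n j}
    (hx : x ∈ T.normalSpan a0 g n j) :
    T.mul (ar k) n (deg k) j (g k) x ∈ T.normalSpan a0 g (ar k + n) (deg k + j) := by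
  refine T.map_mem_normalSpan a0 g (T.mul (ar k) n (deg k) j (g k)) ?_ hx
  rintro _ ⟨L, r, π, h, h', rfl⟩
  rw [mul_gcast_right, mul_ρ_right, mul_mulA0Pow]
  refine T.gcast_mem_normalSpan a0 g _ _ (T.ρ_mem_normalSpan a0 g _ ?_)
  exact T.gcast_mem_normalSpan a0 g _ _
    (T.mulA0Pow_monomial_mem_normalSpan a0 g (k :: L) r rfl rfl)

theorem mulA0Pow_monomial_mul_mem_normalSpan (r : ℕ) (L : List κ) {n : ℕ} {j : ℤ} {x : A n j}
    (hx : x ∈ T.normalSpan a0 g n j) :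
    T.mul _ n _ j (T.mulA0Pow a0 r (T.monomial g L)) x ∈
      T.normalSpan a0 g ((L.map ar).sum + r + n) ((L.map deg).sum + j) := by
  induction r generalizing L n j x with
  | zero =>
    induction L generalizing n j x with
    | nil =>
      show T.mul 0 n 0 j T.one x ∈ T.normalSpan a0 g (0 + n) (0 + j)
      rw [T.one_mul]
      exact T.gcast_mem_normalSpan a0 g _ _ hx
    | cons k L ih =>
      show T.mul _ n _ j (T.mul _ _ _ _ (g k) (T.monomial g L)) x ∈ _
      rw [T.mul_assoc]
      exact T.gcast_mem_normalSpan a0 g _ _ (T.generator_mul_mem_normalSpan a0 g k (ih hx))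
  | succ r ih =>
    rw [mulA0Pow, mulA0_apply, mul_gcast_left, T.mul_assoc]
    exact T.gcast_mem_normalSpan a0 g _ _
      (T.gcast_mem_normalSpan a0 g _ _ (ih L (T.a0_mul_mem_normalSpan a0 g hx)))

theorem mul_mem_normalSpan {m n : ℕ} {j j' : ℤ} {x : A m j} {y : A n j'}
    (hx : x ∈ T.normalSpan a0 g m j) (hy : y ∈ T.normalSpan a0 g n j') :
    T.mul m n j j' x y ∈ T.normalSpan a0 g (m + n) (j + j') := by
  refine T.map_mem_normalSpan a0 g ((T.mul m n j j').flip y) ?_ hx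
  rintro _ ⟨L, r, π, h, h', rfl⟩
  rw [LinearMap.flip_apply, mul_gcast_left, mul_ρ_left]
  exact T.gcast_mem_normalSpan a0 g _ _
    (T.ρ_mem_normalSpan a0 g _ (T.mulA0Pow_monomial_mul_mem_normalSpan a0 g r L hy))

theorem one_mem_normalSpan : T.one ∈ T.normalSpan a0 g 0 0 :=
  T.mulA0Pow_monomial_mem_normalSpan a0 g [] 0 rfl rfl

theorem isSubTCA_normalSpan : IsSubTCA T (T.normalSpan a0 g) where
  one_mem := T.one_mem_normalSpan a0 g
  perm_mem _ _ π _ := T.ρ_mem_normalSpan a0 g π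
  mul_mem _ _ _ _ _ _ := T.mul_mem_normalSpan a0 g

theorem a0_mem_normalSpan : a0 ∈ T.normalSpan a0 g 1 0 := by
  have h := T.mulA0_mem_normalSpan a0 g (T.one_mem_normalSpan a0 g)
  rw [mulA0_apply, T.one_mul, gcast_gcast] at h
  exact h

theorem generator_mem_normalSpan (k : κ) : g k ∈ T.normalSpan a0 g (ar k) (deg k) := by
  have h := T.ρ_mem_normalSpan a0 g (blockSwap (ar k) 0)⁻¹
    (T.generator_mul_mem_normalSpan a0 g k (T.one_mem_normalSpan a0 g))
  rw [mul_one, ρ_ρ_apply, inv_mul_cancel, ρ_one_apply] at h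
  have h' := T.gcast_mem_normalSpan a0 g (Nat.add_zero (ar k)) (add_zero (deg k)) h
  rw [gcast_gcast] at h'
  exact h'

theorem normalSpan_le {i : ℤ} (W : ∀ n : ℕ, Submodule R (A n i))
    (hρ : ∀ (n : ℕ) (π : Equiv.Perm (Fin n)) (a : A n i), a ∈ W n → T.ρ n i π a ∈ W n)
    (hA0 : ∀ (n : ℕ) (a : A n i), a ∈ W n → T.mulA0 a0 a ∈ W (n + 1))
    (hmonomial : ∀ (L : List κ) (h : (L.map deg).sum = i), gcast rfl h (T.monomial g L) ∈ W _)
    (n : ℕ) : T.normalSpan a0 g n i ≤ W n := by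
  have hA0Pow (r : ℕ) {m : ℕ} (x : A m i) (hx : x ∈ W m) : T.mulA0Pow a0 r x ∈ W (m + r) := by
    induction r with
    | zero => exact hx
    | succ r ih => exact hA0 _ _ ih
  refine Submodule.span_le.mpr ?_
  rintro _ ⟨L, r, π, rfl, rfl, rfl⟩
  exact hρ _ π _ (hA0Pow r _ (hmonomial L rfl))

end NormalForms

end GradedTCA

theorem List.finite_setOf_sum_map_eq {κ : Type*} {deg : κ → ℤ} (hdeg : ∀ k, deg k < 0)
    (hfin : ∀ N : ℤ, {k : κ | N ≤ deg k}.Finite) (i : ℤ) :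
    {L : List κ | (L.map deg).sum = i}.Finite := by
  have : Finite {k : κ | i ≤ deg k} := (hfin i).to_subtype
  refine ((List.finite_length_le {k : κ | i ≤ deg k} (-i).toNat).image
    (List.map Subtype.val)).subset ?_
  rintro L (hL : (L.map deg).sum = i)
  have hnonpos : ∀ d ∈ L.map deg, d ≤ 0 := by
    simpa using fun k _ => (hdeg k).le
  -- In the order dual, `List.single_le_sum` says that the sum is below each summand.
  have hsum_le : ∀ k ∈ L, i ≤ deg k := fun k hk =>
    hL ▸ @List.single_le_sum ℤᵒᵈ _ _ _ _ hnonpos _ (List.mem_map_of_mem hk)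
  have hlength : i ≤ -L.length := by
    simpa [hL] using List.sum_le_card_nsmul (L.map deg) (-1)
      (by simpa using fun k _ => Int.le_sub_one_of_lt (hdeg k))
  refine ⟨L.attach.map fun k => ⟨k.1, hsum_le k.1 k.2⟩, ?_, by simp⟩
  show List.length _ ≤ (-i).toNat
  simp only [List.length_map, List.length_attach]
  omega

/-- Let `A` be a twisted commutative algebra in `ℤ`-graded `R`-modules
with a generating set `{a_0} ∪ {g_k}` (i.e. the smallest sub-tca containing these
homogeneous elements is `A` itself) such that `a_0 ∈ A^0(1)`, `deg (g_k) < 0` for all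
`k`, and for every `N` only finitely many generators have degree `≥ N`.  Then for each
`i : ℤ` the FI-module `n ↦ A^i(n)`, whose structure maps are given by the symmetric group
actions together with multiplication by `a_0`, is finitely generated: there is a finite
list of elements contained in no proper sub-FI-module (a sub-FI-module being a family of
submodules `W n ≤ A^i(n)` closed under the symmetric group actions and under
multiplication by `a_0`). -/
theorem tca_finitely_generated_FI
    {R : Type*} [CommRing R] {A : ℕ → ℤ → Type*}
    [∀ n i, AddCommGroup (A n i)] [∀ n i, Module R (A n i)]
    (T : GradedTCA R A)
    (a0 : A 1 0)
    (κ : Type*) (ar : κ → ℕ) (deg : κ → ℤ) (g : ∀ k, A (ar k) (deg k))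
    (hdeg : ∀ k, deg k < 0)
    (hfin : ∀ N : ℤ, {k : κ | N ≤ deg k}.Finite)
    (hgen : ∀ W : ∀ n i, Submodule R (A n i), IsSubTCA T W → a0 ∈ W 1 0 →
      (∀ k, g k ∈ W (ar k) (deg k)) → ∀ n i, W n i = ⊤)
    (i : ℤ) :
    ∃ l : List (Σ n : ℕ, A n i),
      ∀ W : ∀ n : ℕ, Submodule R (A n i),
        (∀ (n : ℕ) (π : Equiv.Perm (Fin n)) (a : A n i), a ∈ W n → T.ρ n i π a ∈ W n) →
        (∀ (n : ℕ) (a : A n i), a ∈ W n →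
          gcast rfl (add_zero i) (T.mul n 1 i 0 a a0) ∈ W (n + 1)) →
        (∀ e ∈ l, e.2 ∈ W e.1) →
        ∀ n : ℕ, W n = ⊤ := by
  let monomialsOfDegree := (List.finite_setOf_sum_map_eq hdeg hfin i).toFinset
  refine ⟨monomialsOfDegree.toList.attach.map fun L =>
    ⟨_, gcast rfl (by simpa [monomialsOfDegree] using L.2) (T.monomial g L.1)⟩, ?_⟩
  intro W hρ hA0 hl n
  have hmonomial (L : List κ) (h : (L.map deg).sum = i) : gcast rfl h (T.monomial g L) ∈ W _ :=
    hl _ (List.mem_map.mpr ⟨⟨L, by simpa [monomialsOfDegree] using h⟩, List.mem_attach _ _, rfl⟩)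
  rw [eq_top_iff, ← hgen _ (T.isSubTCA_normalSpan a0 g) (T.a0_mem_normalSpan a0 g)
    (T.generator_mem_normalSpan a0 g) n i]
  exact T.normalSpan_le a0 g W hρ hA0 hmonomial n
end
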